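/- arXiv:2006.10599 — 3 statements merged into one kernel-verified Lean document; each statement's English description precedes it below -/
import Mathlib

section
/- Let (X, μ) be a measure space, let p, q : X → ℝ be measurable functions with p(x) > 0 and q(x) > 0 for μ-almost every x, and suppose x ↦ p(x)·log(p(x)/q(x)) and x ↦ q(x)·log(q(x)/p(x)) are μ-integrable. Then the function α ↦ (1−α)·∫ p·log( p / (p^α · q^(1−α)) ) dμ + α·∫ q·log( q / (p^α · q^(1−α)) ) dμ tends to ∫ p·log(p/q) dμ = KL(p ∥ q) as α → 0 within (0,1). -/
/-!
Pointwise, `log (p / (p^α q^(1-α))) = (1-α) log (p/q)` and `log (q / (p^α q^(1-α))) = α log (q/p)`,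
so the skew-geometric Jensen–Shannon divergence equals `(1-α)² KL(p‖q) + α² KL(q‖p)`,
a polynomial in `α` whose value at `0` is `KL(p‖q)`.
-/

open MeasureTheory Filter Topology

namespace Real

lemma log_div_rpow_mul_rpow_one_sub {a b : ℝ} (ha : 0 < a) (hb : 0 < b) (α : ℝ) :
    log (a / (a ^ α * b ^ (1 - α))) = (1 - α) * log (a / b) := by
  have haα : 0 < a ^ α := rpow_pos_of_pos ha α
  have hbα : 0 < b ^ (1 - α) := rpow_pos_of_pos hb (1 - α)
  rw [log_div ha.ne' (mul_pos haα hbα).ne', log_mul haα.ne' hbα.ne', log_rpow ha, log_rpow hb,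
    log_div ha.ne' hb.ne']
  ring

lemma log_div_rpow_one_sub_mul_rpow {a b : ℝ} (ha : 0 < a) (hb : 0 < b) (α : ℝ) :
    log (b / (a ^ α * b ^ (1 - α))) = α * log (b / a) := by
  have h := log_div_rpow_mul_rpow_one_sub hb ha (1 - α)
  rwa [sub_sub_cancel, mul_comm] at h

end Real

lemma integral_mul_log_div_rpow_mul_rpow_one_sub {X : Type*} [MeasurableSpace X]
    {μ : Measure X} {p q : X → ℝ} (hp0 : ∀ᵐ x ∂μ, 0 < p x) (hq0 : ∀ᵐ x ∂μ, 0 < q x) (α : ℝ) :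
    ∫ x, p x * Real.log (p x / (p x ^ α * q x ^ (1 - α))) ∂μ
      = (1 - α) * ∫ x, p x * Real.log (p x / q x) ∂μ := by
  rw [← integral_const_mul]
  refine integral_congr_ae ?_
  filter_upwards [hp0, hq0] with x hpx hqx
  rw [Real.log_div_rpow_mul_rpow_one_sub hpx hqx]
  ring

lemma integral_mul_log_div_rpow_one_sub_mul_rpow {X : Type*} [MeasurableSpace X]
    {μ : Measure X} {p q : X → ℝ} (hp0 : ∀ᵐ x ∂μ, 0 < p x) (hq0 : ∀ᵐ x ∂μ, 0 < q x) (α : ℝ) :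
    ∫ x, q x * Real.log (q x / (p x ^ α * q x ^ (1 - α))) ∂μ
      = α * ∫ x, q x * Real.log (q x / p x) ∂μ := by
  rw [← integral_const_mul]
  refine integral_congr_ae ?_
  filter_upwards [hp0, hq0] with x hpx hqx
  rw [Real.log_div_rpow_one_sub_mul_rpow hpx hqx]
  ring

lemma tendsto_one_sub_mul_one_sub_mul_add_mul_mul (A B : ℝ) :
    Tendsto (fun α : ℝ => (1 - α) * ((1 - α) * A) + α * (α * B)) (𝓝 0) (𝓝 A) := by
  have h := (by fun_prop : Continuous fun α : ℝ => (1 - α) * ((1 - α) * A) + α * (α * B)).tendsto 0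
  simpa using h

theorem jsg_alpha_prime_tendsto_forward_KL_general
    {X : Type*} [MeasurableSpace X] (μ : Measure X)
    (p q : X → ℝ)
    (hp0 : ∀ᵐ x ∂μ, 0 < p x) (hq0 : ∀ᵐ x ∂μ, 0 < q x) :
    Tendsto (fun α : ℝ =>
        (1 - α) * ∫ x, p x * Real.log (p x / (p x ^ α * q x ^ (1 - α))) ∂μ
          + α * ∫ x, q x * Real.log (q x / (p x ^ α * q x ^ (1 - α))) ∂μ)
      (𝓝[Set.Ioo (0 : ℝ) 1] 0)
      (𝓝 (∫ x, p x * Real.log (p x / q x) ∂μ)) := by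
  simp only [integral_mul_log_div_rpow_mul_rpow_one_sub hp0 hq0,
    integral_mul_log_div_rpow_one_sub_mul_rpow hp0 hq0]
  exact (tendsto_one_sub_mul_one_sub_mul_add_mul_mul _ _).mono_left nhdsWithin_le_nhds

theorem jsg_alpha_prime_tendsto_forward_KL
    {X : Type*} [MeasurableSpace X] (μ : Measure X)
    (p q : X → ℝ) (hp : Measurable p) (hq : Measurable q)
    (hp0 : ∀ᵐ x ∂μ, 0 < p x) (hq0 : ∀ᵐ x ∂μ, 0 < q x)
    (hpq : Integrable (fun x => p x * Real.log (p x / q x)) μ)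
    (hqp : Integrable (fun x => q x * Real.log (q x / p x)) μ) :
    Tendsto (fun α : ℝ =>
        (1 - α) * ∫ x, p x * Real.log (p x / (p x ^ α * q x ^ (1 - α))) ∂μ
          + α * ∫ x, q x * Real.log (q x / (p x ^ α * q x ^ (1 - α))) ∂μ)
      (𝓝[Set.Ioo (0 : ℝ) 1] 0)
      (𝓝 (∫ x, p x * Real.log (p x / q x) ∂μ)) :=
  jsg_alpha_prime_tendsto_forward_KL_general μ p q hp0 hq0
end

section
/- Let (X, μ) be a measure space, let p, q : X → ℝ be measurable functions with p(x) > 0 and q(x) > 0 for μ-almost every x, and suppose the function x ↦ (p(x) + q(x))·|log(p(x)/q(x))| is μ-integrable. Then the function α ↦ (1−α)·∫ p^α·q^(1−α)·log( (p^α·q^(1−α))/p ) dμ + α·∫ p^α·q^(1−α)·log( (p^α·q^(1−α))/q ) dμ tends to ∫ p·log(p/q) dμ = KL(p ∥ q) as α → 1 within (0,1). -/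
/-!
Writing `G = p^α q^(1-α)` and `L = log (p/q)`, one has `log (G/p) = -(1-α) L` and
`log (G/q) = α L`, so the skew divergence equals `(2α - 1) ∫ G L`. Since `G ≤ p + q` for
`α ∈ [0,1]` (weighted AM–GM), dominated convergence gives `∫ G L → ∫ p L` as `α → 1`.
-/

open MeasureTheory Filter Set Topology

namespace Real

lemma rpow_mul_rpow_one_sub_le_add {a b t : ℝ} (ha : 0 ≤ a) (hb : 0 ≤ b)
    (ht : t ∈ Icc 0 1) :
    a ^ t * b ^ (1 - t) ≤ a + b :=
  calc a ^ t * b ^ (1 - t) ≤ t * a + (1 - t) * b :=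
        geom_mean_le_arith_mean2_weighted ht.1 (sub_nonneg.2 ht.2) ha hb (by ring)
    _ ≤ a + b := by nlinarith [ht.1, ht.2]

lemma log_rpow_mul_rpow_one_sub_div_left {a b : ℝ} (ha : 0 < a) (hb : 0 < b) (t : ℝ) :
    log (a ^ t * b ^ (1 - t) / a) = -(1 - t) * log (a / b) := by
  rw [log_div (by positivity) ha.ne', log_mul (by positivity) (by positivity), log_rpow ha,
    log_rpow hb, log_div ha.ne' hb.ne']
  ring

lemma log_rpow_mul_rpow_one_sub_div_right {a b : ℝ} (ha : 0 < a) (hb : 0 < b) (t : ℝ) :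
    log (a ^ t * b ^ (1 - t) / b) = t * log (a / b) := by
  rw [log_div (by positivity) hb.ne', log_mul (by positivity) (by positivity), log_rpow ha,
    log_rpow hb, log_div ha.ne' hb.ne']
  ring

lemma continuousAt_rpow_mul_rpow_one_sub {a b : ℝ} (ha : 0 < a) (hb : 0 < b) (t : ℝ) :
    ContinuousAt (fun s : ℝ => a ^ s * b ^ (1 - s)) t :=
  (continuousAt_const_rpow ha.ne').mul
    ((continuousAt_const_rpow hb.ne').comp (continuousAt_const.sub continuousAt_id))

end Real

section SkewGeometric

variable {X : Type*} [MeasurableSpace X] {μ : Measure X} {p q : X → ℝ}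

lemma skew_geometric_divergence_eq_mul_integral
    (hp0 : ∀ᵐ x ∂μ, 0 < p x) (hq0 : ∀ᵐ x ∂μ, 0 < q x) (α : ℝ) :
    (1 - α) * ∫ x, p x ^ α * q x ^ (1 - α) * Real.log ((p x ^ α * q x ^ (1 - α)) / p x) ∂μ
        + α * ∫ x, p x ^ α * q x ^ (1 - α) * Real.log ((p x ^ α * q x ^ (1 - α)) / q x) ∂μ
      = (2 * α - 1) * ∫ x, p x ^ α * q x ^ (1 - α) * Real.log (p x / q x) ∂μ := by
  have hleft : ∫ x, p x ^ α * q x ^ (1 - α) * Real.log ((p x ^ α * q x ^ (1 - α)) / p x) ∂μ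
      = -(1 - α) * ∫ x, p x ^ α * q x ^ (1 - α) * Real.log (p x / q x) ∂μ := by
    rw [← integral_const_mul]
    refine integral_congr_ae ?_
    filter_upwards [hp0, hq0] with x hpx hqx
    rw [Real.log_rpow_mul_rpow_one_sub_div_left hpx hqx]
    ring
  have hright :
      ∫ x, p x ^ α * q x ^ (1 - α) * Real.log ((p x ^ α * q x ^ (1 - α)) / q x) ∂μ
      = α * ∫ x, p x ^ α * q x ^ (1 - α) * Real.log (p x / q x) ∂μ := by
    rw [← integral_const_mul]
    refine integral_congr_ae ?_
    filter_upwards [hp0, hq0] with x hpx hqx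
    rw [Real.log_rpow_mul_rpow_one_sub_div_right hpx hqx]
    ring
  rw [hleft, hright]
  ring

lemma tendsto_integral_rpow_mul_rpow_one_sub_mul_log_div
    (hp : Measurable p) (hq : Measurable q)
    (hp0 : ∀ᵐ x ∂μ, 0 < p x) (hq0 : ∀ᵐ x ∂μ, 0 < q x)
    (hInt : Integrable (fun x => (p x + q x) * |Real.log (p x / q x)|) μ) :
    Tendsto (fun α : ℝ => ∫ x, p x ^ α * q x ^ (1 - α) * Real.log (p x / q x) ∂μ)
      (𝓝[Icc 0 1] 1) (𝓝 (∫ x, p x * Real.log (p x / q x) ∂μ)) := by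
  refine tendsto_integral_filter_of_dominated_convergence _
    (Eventually.of_forall fun α => by fun_prop) ?_ hInt ?_
  · filter_upwards [self_mem_nhdsWithin] with α hα
    filter_upwards [hp0, hq0] with x hpx hqx
    rw [Real.norm_eq_abs, abs_mul, abs_of_nonneg (by positivity)]
    gcongr
    exact Real.rpow_mul_rpow_one_sub_le_add hpx.le hqx.le hα
  · filter_upwards [hp0, hq0] with x hpx hqx
    have hlim := ((Real.continuousAt_rpow_mul_rpow_one_sub hpx hqx 1).tendsto.mono_left
      (nhdsWithin_le_nhds (s := Icc 0 1))).mul_const (Real.log (p x / q x))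
    simpa using hlim

end SkewGeometric

theorem dual_jsg_alpha_prime_tendsto_forward_KL
    {X : Type*} [MeasurableSpace X] (μ : Measure X)
    (p q : X → ℝ) (hp : Measurable p) (hq : Measurable q)
    (hp0 : ∀ᵐ x ∂μ, 0 < p x) (hq0 : ∀ᵐ x ∂μ, 0 < q x)
    (hInt : Integrable (fun x => (p x + q x) * |Real.log (p x / q x)|) μ) :
    Tendsto (fun α : ℝ =>
        (1 - α) * ∫ x, p x ^ α * q x ^ (1 - α) *
            Real.log ((p x ^ α * q x ^ (1 - α)) / p x) ∂μ
          + α * ∫ x, p x ^ α * q x ^ (1 - α) *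
            Real.log ((p x ^ α * q x ^ (1 - α)) / q x) ∂μ)
      (𝓝[Set.Ioo (0 : ℝ) 1] 1)
      (𝓝 (∫ x, p x * Real.log (p x / q x) ∂μ)) := by
  have hweight : Tendsto (fun α : ℝ => 2 * α - 1) (𝓝[Ioo 0 1] 1) (𝓝 1) := by
    convert ((continuous_const.mul continuous_id).sub continuous_const).continuousWithinAt
      (f := fun α : ℝ => 2 * α - 1) (s := Ioo 0 1) (x := 1) |>.tendsto using 2
    norm_num
  have hintegral :=
    (tendsto_integral_rpow_mul_rpow_one_sub_mul_log_div hp hq hp0 hq0 hInt).mono_left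
      (nhdsWithin_mono _ Ioo_subset_Icc_self)
  simpa only [one_mul, skew_geometric_divergence_eq_mul_integral hp0 hq0] using
    hweight.mul hintegral
end

section
/- Let (X, μ) be a measure space, let p, q : X → ℝ be measurable functions with p(x) > 0 and q(x) > 0 for μ-almost every x, and suppose x ↦ p(x)·log(p(x)/q(x)) and x ↦ q(x)·log(q(x)/p(x)) are μ-integrable. Then for every α ∈ [0,1], the skew-geometric Jensen–Shannon expression with the original geometric mean G_α(p,q)(x) = p(x)^(1−α)·q(x)^α satisfies: (1−α)·∫ p·log( p / (p^(1−α)·q^α) ) dμ + α·∫ q·log( q / (p^(1−α)·q^α) ) dμ = α·(1−α)·( ∫ p·log(p/q) dμ + ∫ q·log(q/p) dμ ). -/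
open MeasureTheory Filter Set

/-! Pointwise, `log (a / (a ^ s * b ^ t)) = t * log (a / b)` whenever `s + t = 1`, so both integrands
are a.e. constant multiples of the KL integrands and the identity is linear algebra in `α`. -/

lemma Real.log_div_rpow_mul_rpow {a b s t : ℝ} (ha : 0 < a) (hb : 0 < b) (hst : s + t = 1) :
    Real.log (a / (a ^ s * b ^ t)) = t * Real.log (a / b) := by
  obtain rfl : s = 1 - t := by linarith
  rw [Real.log_div ha.ne' (by positivity), Real.log_mul (by positivity) (by positivity),
    Real.log_rpow ha, Real.log_rpow hb, Real.log_div ha.ne' hb.ne']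
  ring

lemma integral_mul_log_div_rpow_mul_rpow {X : Type*} [MeasurableSpace X] {μ : Measure X}
    {p q : X → ℝ} (hp0 : ∀ᵐ x ∂μ, 0 < p x) (hq0 : ∀ᵐ x ∂μ, 0 < q x) {s t : ℝ} (hst : s + t = 1) :
    ∫ x, p x * Real.log (p x / (p x ^ s * q x ^ t)) ∂μ
      = t * ∫ x, p x * Real.log (p x / q x) ∂μ := by
  rw [← integral_const_mul]
  refine integral_congr_ae ?_
  filter_upwards [hp0, hq0] with x hpx hqx
  rw [Real.log_div_rpow_mul_rpow hpx hqx hst]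
  ring

theorem jsg_alpha_original_quadratic_identity_general
    {X : Type*} [MeasurableSpace X] (μ : Measure X)
    (p q : X → ℝ)
    (hp0 : ∀ᵐ x ∂μ, 0 < p x) (hq0 : ∀ᵐ x ∂μ, 0 < q x) :
    ∀ α ∈ Set.Icc (0 : ℝ) 1,
      (1 - α) * ∫ x, p x * Real.log (p x / (p x ^ (1 - α) * q x ^ α)) ∂μ
        + α * ∫ x, q x * Real.log (q x / (p x ^ (1 - α) * q x ^ α)) ∂μ
      = α * (1 - α) * ((∫ x, p x * Real.log (p x / q x) ∂μ)
          + ∫ x, q x * Real.log (q x / p x) ∂μ) := by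
  intro α _
  have h_left : ∫ x, p x * Real.log (p x / (p x ^ (1 - α) * q x ^ α)) ∂μ
      = α * ∫ x, p x * Real.log (p x / q x) ∂μ :=
    integral_mul_log_div_rpow_mul_rpow hp0 hq0 (by ring)
  have h_right : ∫ x, q x * Real.log (q x / (p x ^ (1 - α) * q x ^ α)) ∂μ
      = (1 - α) * ∫ x, q x * Real.log (q x / p x) ∂μ := by
    convert integral_mul_log_div_rpow_mul_rpow hq0 hp0 (s := α) (t := 1 - α) (by ring) using 6
    exact mul_comm _ _
  rw [h_left, h_right]
  ring

theorem jsg_alpha_original_quadratic_identity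
    {X : Type*} [MeasurableSpace X] (μ : Measure X)
    (p q : X → ℝ) (hp : Measurable p) (hq : Measurable q)
    (hp0 : ∀ᵐ x ∂μ, 0 < p x) (hq0 : ∀ᵐ x ∂μ, 0 < q x)
    (hpq : Integrable (fun x => p x * Real.log (p x / q x)) μ)
    (hqp : Integrable (fun x => q x * Real.log (q x / p x)) μ) :
    ∀ α ∈ Set.Icc (0 : ℝ) 1,
      (1 - α) * ∫ x, p x * Real.log (p x / (p x ^ (1 - α) * q x ^ α)) ∂μ
        + α * ∫ x, q x * Real.log (q x / (p x ^ (1 - α) * q x ^ α)) ∂μ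
      = α * (1 - α) * ((∫ x, p x * Real.log (p x / q x) ∂μ)
          + ∫ x, q x * Real.log (q x / p x) ∂μ) :=
  jsg_alpha_original_quadratic_identity_general μ p q hp0 hq0
end
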